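/- For each (I,J) ∈ O, the set A_{I,J} is star-shaped with respect to the point b: for every y ∈ A_{I,J} and every t ∈ [0,1], the point (1−t)y + tb lies in A_{I,J}. -/

import Mathlib

open Finset

/-- The maximum of `|z i - z j|` over `j ∈ S`, with the convention `max ∅ = 0`. -/
noncomputable def maxDist {n : ℕ} (z : Fin n → ℝ) (i : Fin n) (S : Finset (Fin n)) : ℝ :=
  if h : S.Nonempty then S.sup' h (fun j => |z i - z j|) else 0

/-- `ν^z_{I,i}`: the minimum over all subsets `S ⊆ I \ {i}` with `|S| = ⌊n/3⌋` of
`max_{j ∈ S} |z i - z j|`, with the convention `min ∅ = 0`. -/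
noncomputable def nu (n : ℕ) (z : Fin n → ℝ) (I : Finset (Fin n)) (i : Fin n) : ℝ :=
  if h : ((I.erase i).powersetCard (n / 3)).Nonempty then
    ((I.erase i).powersetCard (n / 3)).inf' h (maxDist z i)
  else 0

/-- `ν^z_I = max_{i ∈ I} ν^z_{I,i}`, with the convention `max ∅ = 0`. -/
noncomputable def nuMax (n : ℕ) (z : Fin n → ℝ) (I : Finset (Fin n)) : ℝ :=
  if h : I.Nonempty then I.sup' h (nu n z I) else 0

/-- `δ^z = (max{t₁,…,tₙ} - min{t₁,…,tₙ}) / n`. -/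
noncomputable def delta (n : ℕ) (z : Fin n → ℝ) : ℝ :=
  if h : (Finset.univ : Finset (Fin n)).Nonempty then
    (Finset.univ.sup' h z - Finset.univ.inf' h z) / n
  else 0

/-- `ẏ = (t₁, …, t_{n-1}, 0) ∈ ℝⁿ` for `y = (t₁, …, t_{n-1}) ∈ ℝ^{n-1}`. -/
def ydot (n : ℕ) (y : Fin (n - 1) → ℝ) : Fin n → ℝ :=
  fun i => if h : (i : ℕ) < n - 1 then y ⟨i, h⟩ else 0

/-- The open cube `(-1, 1)^m`, the interior of `D^m = [-1,1]^m`. -/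
def IntD (m : ℕ) : Set (Fin m → ℝ) := {y | ∀ i, y i ∈ Set.Ioo (-1 : ℝ) 1}

/-- `(I, J) ∈ O`: `I` and `J` are disjoint nonempty subsets of `[n]` with `I ∪ J = [n]`,
`|I| > n/3`, and `|J| > n/3`. -/
def memO (n : ℕ) (I J : Finset (Fin n)) : Prop :=
  I.Nonempty ∧ J.Nonempty ∧ Disjoint I J ∧ I ∪ J = Finset.univ ∧
    (n : ℝ) < 3 * I.card ∧ (n : ℝ) < 3 * J.card

/-- The set `A_{I,J}`. -/
def setAIJ (n : ℕ) (I J : Finset (Fin n)) : Set (Fin (n - 1) → ℝ) :=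
  {y | y ∈ IntD (n - 1) ∧ ∀ i ∈ I, ∀ j ∈ J,
    delta n (ydot n y) < ydot n y j - ydot n y i ∧
    nu n (ydot n y) I i < delta n (ydot n y) ∧
    nu n (ydot n y) J j < delta n (ydot n y)}

/-- The set `A = { y ∈ Int(D^{n-1}) : ν^{ẏ}_{[n]} < δ^{ẏ} }`. -/
def setA (n : ℕ) : Set (Fin (n - 1) → ℝ) :=
  {y | y ∈ IntD (n - 1) ∧ nuMax n (ydot n y) Finset.univ < delta n (ydot n y)}

/-- The point `b ∈ ℝ^{n-1}` associated to `(I, J) ∈ O`: if `n ∈ J` then `b_i = -1/2` for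
`i ∈ I` and `b_j = 0` for `j ∈ J \ {n}`; if `n ∈ I` then `b_i = 0` for `i ∈ I \ {n}` and
`b_j = 1/2` for `j ∈ J`. -/
noncomputable def bpt (n : ℕ) (I J : Finset (Fin n)) : Fin (n - 1) → ℝ :=
  fun i =>
    if (⟨n - 1, by have := i.isLt; omega⟩ : Fin n) ∈ J then
      (if Fin.castLE (Nat.sub_le n 1) i ∈ I then -(1 / 2 : ℝ) else 0)
    else
      (if Fin.castLE (Nat.sub_le n 1) i ∈ I then 0 else (1 / 2 : ℝ))

/-!
In the coordinates `ẏ`, the point `b` becomes a vector that is constant on `I` and on `J`, its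
value on `J` exceeding its value on `I` by `1/2`. Hence on each block the point
`w = (1-t) ẏ + t ḃ` of the segment is an affine image of `ẏ` with slope `1 - t`: the `ν`'s
scale by `1 - t`, `w j - w i = (1 - t) (ẏ j - ẏ i) + t / 2`, and since the block `I` lies below
the block `J`, `δ^w = (1 - t) δ^ẏ + t / (2n)`. Every inequality defining `A_{I,J}` is thus a
convex combination of the one at `y` and a strict one at `b`, where `0 < 1/(2n) < 1/2`.
-/

lemma one_sub_mul_add_mul_lt {a b c d t : ℝ} (hab : a < b) (hcd : c < d) (ht0 : 0 ≤ t)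
    (ht1 : t ≤ 1) : (1 - t) * a + t * c < (1 - t) * b + t * d := by
  rcases ht1.eq_or_lt with rfl | ht1
  · simpa using hcd
  · nlinarith [mul_lt_mul_of_pos_left hab (sub_pos.2 ht1), mul_le_mul_of_nonneg_left hcd.le ht0]

lemma monotone_mul_add {a : ℝ} (ha : 0 ≤ a) (c : ℝ) : Monotone fun x : ℝ => a * x + c :=
  fun _ _ h => by dsimp only; gcongr

lemma Finset.sup'_mul_add {ι : Type*} {s : Finset ι} (hs : s.Nonempty) (f : ι → ℝ) {a : ℝ}
    (ha : 0 ≤ a) (c : ℝ) : s.sup' hs (fun k => a * f k + c) = a * s.sup' hs f + c :=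
  (apply_sup'_eq_sup'_comp hs (fun x => a * x + c) fun _ _ => (monotone_mul_add ha c).map_max).symm

lemma Finset.inf'_mul_add {ι : Type*} {s : Finset ι} (hs : s.Nonempty) (f : ι → ℝ) {a : ℝ}
    (ha : 0 ≤ a) (c : ℝ) : s.inf' hs (fun k => a * f k + c) = a * s.inf' hs f + c :=
  (apply_inf'_eq_inf'_comp hs (fun x => a * x + c) fun _ _ => (monotone_mul_add ha c).map_min).symm

section Affine

variable {n : ℕ} {w z : Fin n → ℝ} {a c : ℝ} {i : Fin n}

lemma maxDist_eq_mul_of_affine (ha : 0 ≤ a) {S : Finset (Fin n)}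
    (hw : ∀ k ∈ insert i S, w k = a * z k + c) : maxDist w i S = a * maxDist z i S := by
  unfold maxDist
  split_ifs with hS
  · rw [mul₀_sup' ha]
    refine sup'_congr hS rfl fun j hj => ?_
    rw [hw i (mem_insert_self i S), hw j (mem_insert_of_mem hj),
      show a * z i + c - (a * z j + c) = a * (z i - z j) by ring, abs_mul, abs_of_nonneg ha]
  · rw [mul_zero]

lemma nu_eq_mul_of_affine (ha : 0 ≤ a) {I : Finset (Fin n)}
    (hw : ∀ k ∈ insert i I, w k = a * z k + c) : nu n w I i = a * nu n z I i := by
  unfold nu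
  split_ifs with hS
  · refine (inf'_congr hS rfl fun S hS => ?_).trans ((inf'_mul_add hS _ ha 0).trans (add_zero _))
    rw [add_zero]
    refine maxDist_eq_mul_of_affine ha fun k hk => hw k ?_
    rcases mem_insert.1 hk with rfl | hk
    · exact mem_insert_self k I
    · exact mem_insert_of_mem (mem_of_mem_erase ((mem_powersetCard.1 hS).1 hk))
  · rw [mul_zero]

end Affine

lemma delta_eq_of_forall_le {n : ℕ} {I J : Finset (Fin n)} (hI : I.Nonempty) (hJ : J.Nonempty)
    (hU : I ∪ J = univ) {f : Fin n → ℝ} (hf : ∀ i ∈ I, ∀ j ∈ J, f i ≤ f j) :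
    delta n f = (J.sup' hJ f - I.inf' hI f) / n := by
  have hu : (univ : Finset (Fin n)).Nonempty := hU ▸ hI.mono subset_union_left
  have hsup : univ.sup' hu f = J.sup' hJ f := by
    refine le_antisymm (sup'_le hu f fun k _ => ?_) (sup'_mono f (subset_univ J) hJ)
    rcases mem_union.1 (hU ▸ mem_univ k) with hk | hk
    · exact (hf k hk _ hJ.choose_spec).trans (le_sup' f hJ.choose_spec)
    · exact le_sup' f hk
  have hinf : univ.inf' hu f = I.inf' hI f := by
    refine le_antisymm (inf'_mono f (subset_univ I) hI) (le_inf' hu f fun k _ => ?_)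
    rcases mem_union.1 (hU ▸ mem_univ k) with hk | hk
    · exact inf'_le f hk
    · exact (inf'_le f hI.choose_spec).trans (hf _ hI.choose_spec k hk)
  rw [delta, dif_pos hu, hsup, hinf]

lemma delta_nonneg (n : ℕ) (f : Fin n → ℝ) : 0 ≤ delta n f := by
  unfold delta
  split_ifs with h
  · exact div_nonneg (sub_nonneg.2 ((inf'_le f h.choose_spec).trans (le_sup' f h.choose_spec)))
      n.cast_nonneg
  · exact le_rfl

/-- `A_{I,J} = {y ∈ Int(D^{n-1}) | IsClusterSplit n I J ẏ}`. -/
def IsClusterSplit (n : ℕ) (I J : Finset (Fin n)) (z : Fin n → ℝ) : Prop :=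
  ∀ i ∈ I, ∀ j ∈ J, delta n z < z j - z i ∧ nu n z I i < delta n z ∧ nu n z J j < delta n z

section Segment

variable {n : ℕ} {I J : Finset (Fin n)} {z β : Fin n → ℝ} {c g t : ℝ}

lemma delta_segment (hI : I.Nonempty) (hJ : J.Nonempty) (hU : I ∪ J = univ)
    (hz : ∀ i ∈ I, ∀ j ∈ J, z i ≤ z j) (hβI : ∀ k ∈ I, β k = c) (hβJ : ∀ k ∈ J, β k = c + g)
    (hg : 0 ≤ g) (ht0 : 0 ≤ t) (ht1 : t ≤ 1) :
    delta n ((1 - t) • z + t • β) = (1 - t) * delta n z + t * (g / n) := by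
  have hwI : ∀ k ∈ I, ((1 - t) • z + t • β) k = (1 - t) * z k + t * c := fun k hk => by
    simp [hβI k hk]
  have hwJ : ∀ k ∈ J, ((1 - t) • z + t • β) k = (1 - t) * z k + t * (c + g) := fun k hk => by
    simp [hβJ k hk]
  have hw : ∀ i ∈ I, ∀ j ∈ J, ((1 - t) • z + t • β) i ≤ ((1 - t) • z + t • β) j := by
    intro i hi j hj
    rw [hwI i hi, hwJ j hj]
    gcongr
    exacts [hz i hi j hj, le_add_of_nonneg_right hg]
  have h1t : 0 ≤ 1 - t := sub_nonneg.2 ht1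
  rw [delta_eq_of_forall_le hI hJ hU hw, delta_eq_of_forall_le hI hJ hU hz, sup'_congr hJ rfl hwJ,
    inf'_congr hI rfl hwI, sup'_mul_add hJ z h1t, inf'_mul_add hI z h1t]
  ring

theorem IsClusterSplit.segment (hn : 1 < n) (hU : I ∪ J = univ) (hz : IsClusterSplit n I J z)
    (hβI : ∀ k ∈ I, β k = c) (hβJ : ∀ k ∈ J, β k = c + g) (hg : 0 < g) (ht0 : 0 ≤ t)
    (ht1 : t ≤ 1) : IsClusterSplit n I J ((1 - t) • z + t • β) := by
  intro i hi j hj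
  obtain ⟨hgap, hνI, hνJ⟩ := hz i hi j hj
  have hz_le : ∀ i ∈ I, ∀ j ∈ J, z i ≤ z j := fun i hi j hj => by
    linarith [(hz i hi j hj).1, delta_nonneg n z]
  have hwI : ∀ k ∈ insert i I, ((1 - t) • z + t • β) k = (1 - t) * z k + t * c := by
    rw [insert_eq_of_mem hi]
    exact fun k hk => by simp [hβI k hk]
  have hwJ : ∀ k ∈ insert j J, ((1 - t) • z + t • β) k = (1 - t) * z k + t * (c + g) := by
    rw [insert_eq_of_mem hj]
    exact fun k hk => by simp [hβJ k hk]
  have hgn : g / n < g := div_lt_self hg (by exact_mod_cast hn)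
  have hgn0 : 0 < g / n := by positivity
  rw [delta_segment ⟨i, hi⟩ ⟨j, hj⟩ hU hz_le hβI hβJ hg.le ht0 ht1,
    nu_eq_mul_of_affine (sub_nonneg.2 ht1) hwI, nu_eq_mul_of_affine (sub_nonneg.2 ht1) hwJ,
    hwI i (mem_insert_self i I), hwJ j (mem_insert_self j J)]
  refine ⟨?_, ?_, ?_⟩
  · calc _ < (1 - t) * (z j - z i) + t * g := one_sub_mul_add_mul_lt hgap hgn ht0 ht1
      _ = _ := by ring
  · simpa using one_sub_mul_add_mul_lt hνI hgn0 ht0 ht1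
  · simpa using one_sub_mul_add_mul_lt hνJ hgn0 ht0 ht1

end Segment

section Cube

variable {n : ℕ}

lemma ydot_add (y x : Fin (n - 1) → ℝ) : ydot n (y + x) = ydot n y + ydot n x := by
  funext k
  simp only [ydot, Pi.add_apply]
  split_ifs <;> simp

lemma ydot_smul (a : ℝ) (y : Fin (n - 1) → ℝ) : ydot n (a • y) = a • ydot n y := by
  funext k
  simp only [ydot, Pi.smul_apply]
  split_ifs <;> simp

lemma ydot_bpt {I J : Finset (Fin n)} (hdisj : Disjoint I J) (hU : I ∪ J = univ) (k : Fin n) :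
    ydot n (bpt n I J) k = (if k ∈ I then 0 else 1 / 2) -
      (if (⟨n - 1, by have := k.isLt; omega⟩ : Fin n) ∈ J then 1 / 2 else 0) := by
  unfold ydot bpt
  by_cases hk : (k : ℕ) < n - 1
  · have hcast : Fin.castLE (Nat.sub_le n 1) ⟨k, hk⟩ = k := rfl
    rw [dif_pos hk, hcast]
    split_ifs <;> norm_num
  · have hlast : k = ⟨n - 1, by omega⟩ := Fin.ext (show (k : ℕ) = n - 1 by omega)
    have hIJ : k ∈ I ↔ k ∉ J :=
      ⟨fun h => disjoint_left.1 hdisj h, (mem_union.1 (hU ▸ mem_univ k)).resolve_right⟩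
    rw [dif_neg hk, ← hlast]
    by_cases hkJ : k ∈ J <;> simp [hIJ, hkJ]

lemma convex_IntD (m : ℕ) : Convex ℝ (IntD m) :=
  fun _ hx _ hy _ _ ha hb hab k => convex_Ioo (-1 : ℝ) 1 (hx k) (hy k) ha hb hab

lemma bpt_mem_IntD (I J : Finset (Fin n)) : bpt n I J ∈ IntD (n - 1) := fun k => by
  unfold bpt
  split_ifs <;> norm_num

end Cube

/-- For each `(I,J) ∈ O`, the set `A_{I,J}` is star-shaped with respect to the point `b`. -/
theorem stmt_4 (n : ℕ) (hn : 2 ≤ n) (I J : Finset (Fin n)) (hIJ : memO n I J) :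
    ∀ y ∈ setAIJ n I J, ∀ t ∈ Set.Icc (0 : ℝ) 1,
      (1 - t) • y + t • bpt n I J ∈ setAIJ n I J := by
  obtain ⟨-, -, hdisj, hU, -, -⟩ := hIJ
  rintro y ⟨hyD, hy⟩ t ⟨ht0, ht1⟩
  refine ⟨convex_IntD _ hyD (bpt_mem_IntD I J) (sub_nonneg.2 ht1) ht0 (sub_add_cancel 1 t), ?_⟩
  set e : ℝ := if (⟨n - 1, by omega⟩ : Fin n) ∈ J then 1 / 2 else 0
  have hbI : ∀ k ∈ I, ydot n (bpt n I J) k = -e := fun k hk => by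
    rw [ydot_bpt hdisj hU, if_pos hk, zero_sub]
  have hbJ : ∀ k ∈ J, ydot n (bpt n I J) k = -e + 1 / 2 := fun k hk => by
    rw [ydot_bpt hdisj hU, if_neg (disjoint_right.1 hdisj hk)]
    ring
  show IsClusterSplit n I J (ydot n ((1 - t) • y + t • bpt n I J))
  rw [ydot_add, ydot_smul, ydot_smul]
  exact IsClusterSplit.segment hn hU hy hbI hbJ one_half_pos ht0 ht1
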